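/- arXiv:1106.3952 — 4 statements merged into one kernel-verified Lean document; each statement's English description precedes it below -/
import Mathlib

section
/- For positive integers m and n, the sum of divisors d of n with d ≡ m (mod 2m) equals m times the sum of odd divisors of n/m (interpreted as 0 if m does not divide n). -/
/-- σ(n) = sum of divisors of n (0 if n = 0). -/
def sigma1 (n : ℕ) : ℤ := ∑ d ∈ n.divisors, (d : ℤ)

/-- σ(n/m), interpreted as 0 when m does not divide n. -/
def sigmaDiv (n m : ℕ) : ℤ := if m ∣ n then sigma1 (n / m) else 0

/-- σ*(n) = sum of divisors d of n with n/d odd. -/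
def sigmaStar (n : ℕ) : ℤ := ∑ d ∈ n.divisors.filter (fun d => Odd (n / d)), (d : ℤ)

/-- σ*(n/m), interpreted as 0 when m does not divide n. -/
def sigmaStarDiv (n m : ℕ) : ℤ := if m ∣ n then sigmaStar (n / m) else 0

/-! The divisors `d ≡ m (mod 2m)` of `n` are exactly the numbers `m k` with `k` an odd divisor
of `n / m`, since `m k mod 2m = m (k mod 2)`. Summing over this reindexing gives the identity. -/

namespace Nat

theorem dvd_of_mod_two_mul_eq_self {m d : ℕ} (h : d % (2 * m) = m) : m ∣ d :=
  (Nat.dvd_mod_iff (dvd_mul_left m 2)).mp (by rw [h])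

theorem mul_mod_two_mul_eq_self_iff {m k : ℕ} (hm : 0 < m) : m * k % (2 * m) = m ↔ Odd k := by
  rw [mul_comm 2 m, Nat.mul_mod_mul_left, mul_eq_left₀ hm.ne', Nat.odd_iff]

theorem filter_divisors_mod_two_mul_eq_self {m n : ℕ} (hm : 0 < m) (h : m ∣ n) :
    n.divisors.filter (· % (2 * m) = m) = ((n / m).divisors.filter Odd).image (m * ·) := by
  ext d
  simp only [Finset.mem_filter, Finset.mem_image, Nat.mem_divisors]
  constructor
  · rintro ⟨⟨hdn, hn⟩, hd⟩
    obtain ⟨k, rfl⟩ := dvd_of_mod_two_mul_eq_self hd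
    refine ⟨k, ⟨⟨?_, ?_⟩, (mul_mod_two_mul_eq_self_iff hm).mp hd⟩, rfl⟩
    · exact Nat.dvd_div_of_mul_dvd hdn
    · exact (Nat.div_pos (Nat.le_of_dvd (Nat.pos_of_ne_zero hn) h) hm).ne'
  · rintro ⟨k, ⟨⟨hk, hnm⟩, hodd⟩, rfl⟩
    refine ⟨⟨?_, ?_⟩, (mul_mod_two_mul_eq_self_iff hm).mpr hodd⟩
    · exact Nat.mul_div_cancel' h ▸ Nat.mul_dvd_mul_left m hk
    · rintro rfl
      simp at hnm

theorem filter_divisors_mod_two_mul_eq_self_eq_empty {m n : ℕ} (h : ¬m ∣ n) :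
    n.divisors.filter (· % (2 * m) = m) = ∅ :=
  Finset.filter_eq_empty_iff.mpr fun _ hd hmod =>
    h ((dvd_of_mod_two_mul_eq_self hmod).trans (Nat.dvd_of_mem_divisors hd))

end Nat

theorem sigma_m_mod_two_m_general (m n : ℕ) :
    (∑ d ∈ n.divisors.filter (fun d => d % (2 * m) = m), (d : ℤ)) =
      m * (if m ∣ n then ∑ d ∈ (n / m).divisors.filter (fun d => Odd d), (d : ℤ) else 0) := by
  rcases m.eq_zero_or_pos with rfl | hm
  -- `d % 0 = d`, so for `m = 0` the condition reads `d = 0`, which no divisor satisfies.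
  · simp [Finset.filter_eq_empty_iff.mpr fun d hd => Nat.ne_of_gt (Nat.pos_of_mem_divisors hd)]
  split_ifs with h
  · rw [Nat.filter_divisors_mod_two_mul_eq_self hm h,
      Finset.sum_image fun _ _ _ _ hk => Nat.eq_of_mul_eq_mul_left hm hk, Finset.mul_sum]
    push_cast
    rfl
  · rw [Nat.filter_divisors_mod_two_mul_eq_self_eq_empty h, Finset.sum_empty, mul_zero]

theorem sigma_m_mod_two_m (m n : ℕ) (hm : 0 < m) (hn : 0 < n) :
    (∑ d ∈ n.divisors.filter (fun d => d % (2 * m) = m), (d : ℤ)) =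
      m * (if m ∣ n then ∑ d ∈ (n / m).divisors.filter (fun d => Odd d), (d : ℤ) else 0) :=
  sigma_m_mod_two_m_general m n
end

section
/- For all positive integers n and k, n·r_k(n) = 2k·(σ*(n) - 4σ*(n/2) + ∑_{j=1}^{n-1} r_k(j)·(σ*(n-j) - 4σ*((n-j)/2))), where σ*(q) = 0 when q is not a positive integer. -/
/-- Number of representations of n as an ordered sum of k squares of integers. -/
noncomputable def rSq (k n : ℕ) : ℕ := Nat.card {x : Fin k → ℤ // ∑ i, (x i) ^ 2 = (n : ℤ)}

open Finset PowerSeries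

lemma Nat.card_subtype_add_eq_sum_antidiagonal {A B : Type*} (f : A → ℕ) (g : B → ℕ)
    [∀ i, Finite {a // f a = i}] [∀ j, Finite {b // g b = j}] (n : ℕ) :
    Nat.card {p : A × B // f p.1 + g p.2 = n} =
      ∑ q ∈ antidiagonal n, Nat.card {a // f a = q.1} * Nat.card {b // g b = q.2} := by
  let e : {p : A × B // f p.1 + g p.2 = n} ≃
      Σ q : antidiagonal n, {a // f a = q.1.1} × {b // g b = q.1.2} :=
    { toFun := fun p => ⟨⟨(f p.1.1, g p.1.2), mem_antidiagonal.2 p.2⟩, ⟨p.1.1, rfl⟩, ⟨p.1.2, rfl⟩⟩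
      invFun := fun q =>
        ⟨(q.2.1.1, q.2.2.1), by rw [q.2.1.2, q.2.2.2]; exact mem_antidiagonal.1 q.1.2⟩
      left_inv := fun _ => rfl
      right_inv := by
        rintro ⟨⟨⟨i, j⟩, hij⟩, ⟨a, ha⟩, ⟨b, hb⟩⟩
        dsimp only at ha hb
        subst ha hb
        rfl }
  rw [Nat.card_congr e, Nat.card_sigma, ← sum_coe_sort (antidiagonal n)]
  simp only [Nat.card_prod]

lemma Finset.Nat.sum_antidiagonal_eq_add_sum_Icc {M : Type*} [AddCommMonoid M]
    (g : ℕ → ℕ → M) (n : ℕ) (h : g n 0 = 0) :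
    ∑ q ∈ antidiagonal n, g q.1 q.2 = g 0 n + ∑ i ∈ Icc 1 (n - 1), g i (n - i) := by
  rw [Nat.sum_antidiagonal_eq_sum_range_succ]
  rcases n with _ | m
  · simp
  rw [sum_range_succ, Nat.sub_self, h, add_zero, sum_range_succ', add_comm, Nat.sub_zero,
    Nat.add_sub_cancel, ← Ico_add_one_right_eq_Icc, sum_Ico_eq_sum_range, Nat.add_sub_cancel]
  simp only [add_comm 1]

lemma sum_range_two_mul_add_one (r : ℕ) : ∑ j ∈ range r, (2 * j + 1 : ℤ) = r ^ 2 := by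
  induction r with
  | zero => simp
  | succ r ih => rw [sum_range_succ, ih]; push_cast; ring

lemma coeff_X_mul_derivative {R : Type*} [CommSemiring R] (f : R⟦X⟧) (n : ℕ) :
    coeff n (X * d⁄dX R f) = n * coeff n f := by
  rcases n with _ | n
  · simp
  · rw [coeff_succ_X_mul, coeff_derivative, mul_comm]
    push_cast
    rfl

def sqNorm {k : ℕ} (x : Fin k → ℤ) : ℕ := ∑ i, (x i).natAbs ^ 2

lemma natAbs_le_sqNorm {k : ℕ} (x : Fin k → ℤ) (i : Fin k) : (x i).natAbs ≤ sqNorm x :=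
  calc (x i).natAbs ≤ (x i).natAbs ^ 2 := Nat.le_self_pow two_ne_zero _
    _ ≤ sqNorm x := single_le_sum (f := fun i => (x i).natAbs ^ 2) (by simp) (mem_univ i)

lemma rSq_eq_card_sqNorm (k n : ℕ) : rSq k n = Nat.card {x : Fin k → ℤ // sqNorm x = n} :=
  Nat.card_congr <| Equiv.subtypeEquivRight fun x => by
    rw [sqNorm, ← Nat.cast_inj (R := ℤ)]
    push_cast
    simp only [sq_abs]

instance (k n : ℕ) : Finite {x : Fin k → ℤ // sqNorm x = n} := by
  refine Set.Finite.to_subtype ((Set.finite_Icc (fun _ => -(n : ℤ)) (fun _ => n)).subset ?_)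
  intro x (hx : sqNorm x = n)
  have h i := hx ▸ natAbs_le_sqNorm x i
  exact ⟨fun i => by have := h i; dsimp; omega, fun i => by have := h i; dsimp; omega⟩

lemma rSq_add (m k n : ℕ) :
    rSq (m + k) n = ∑ q ∈ antidiagonal n, rSq m q.1 * rSq k q.2 := by
  simp only [rSq_eq_card_sqNorm, ← Nat.card_subtype_add_eq_sum_antidiagonal]
  refine Nat.card_congr (Equiv.subtypeEquiv (Fin.appendEquiv m k) fun p => ?_).symm
  simp [sqNorm, Fin.sum_univ_add, Fin.appendEquiv]

lemma rSq_zero_left (n : ℕ) : rSq 0 n = if n = 0 then 1 else 0 := by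
  rcases n with _ | n
  · simp [rSq]
  · rw [if_neg n.succ_ne_zero, rSq, Nat.card_eq_zero]
    left
    exact ⟨fun x => by have := x.2; simp at this; omega⟩

lemma rSq_zero_right (k : ℕ) : rSq k 0 = 1 := by
  rw [rSq_eq_card_sqNorm, Nat.card_eq_one_iff_unique]
  refine ⟨⟨fun x y => Subtype.ext (funext fun i => ?_)⟩, ⟨⟨0, by simp [sqNorm]⟩⟩⟩
  have hx := natAbs_le_sqNorm x.1 i
  have hy := natAbs_le_sqNorm y.1 i
  rw [x.2] at hx
  rw [y.2] at hy
  omega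

lemma rSq_one_eq_card {i n : ℕ} (hi : i ≤ n) :
    rSq 1 i = #{a ∈ Icc (-n : ℤ) n | a.natAbs ^ 2 = i} := by
  rw [rSq_eq_card_sqNorm, ← Nat.card_eq_finsetCard]
  refine Nat.card_congr ((Equiv.funUnique (Fin 1) ℤ).subtypeEquiv fun x => ?_)
  simp only [sqNorm, Fin.sum_univ_one, Equiv.funUnique_apply, Fin.default_eq_zero, mem_filter,
    mem_Icc, iff_and_self]
  intro hx
  have := Nat.le_self_pow two_ne_zero (x 0).natAbs
  omega

lemma sum_antidiagonal_rSq_one_mul (f : ℕ → ℤ) (n : ℕ) :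
    ∑ q ∈ antidiagonal n, (rSq 1 q.1 : ℤ) * f q.2 =
      ∑ a ∈ Icc (-n : ℤ) n with a.natAbs ^ 2 ≤ n, f (n - a.natAbs ^ 2) := by
  rw [Nat.sum_antidiagonal_eq_sum_range_succ (fun i j => (rSq 1 i : ℤ) * f j),
    ← sum_fiberwise_of_maps_to (g := fun a : ℤ => a.natAbs ^ 2) (t := range (n + 1))
      fun a ha => by rw [mem_filter] at ha; rw [mem_range]; omega]
  refine sum_congr rfl fun i hi => ?_
  have hi : i ≤ n := Nat.lt_succ_iff.1 (mem_range.1 hi)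
  rw [sum_congr rfl fun a ha => by rw [(mem_filter.1 ha).2], sum_const, nsmul_eq_mul,
    filter_filter, rSq_one_eq_card hi]
  congr 3
  exact filter_congr fun a _ => ⟨fun h => ⟨h ▸ hi, h⟩, fun h => h.2⟩

lemma natCast_mul_rSq_one (n : ℕ) :
    (n : ℤ) * rSq 1 n = 2 * if IsSquare n then (n : ℤ) else 0 := by
  rw [rSq_one_eq_card le_rfl]
  split_ifs with hsq
  · obtain ⟨r, rfl⟩ := hsq
    rcases Nat.eq_zero_or_pos r with rfl | hr
    · simp
    have : {a ∈ Icc (-(r * r : ℕ) : ℤ) (r * r : ℕ) | a.natAbs ^ 2 = r * r} =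
        {(r : ℤ), -(r : ℤ)} := by
      ext a
      simp only [mem_filter, mem_Icc, mem_insert, mem_singleton, ← sq]
      rw [Nat.pow_left_injective two_ne_zero |>.eq_iff, Int.natAbs_eq_iff]
      constructor
      · exact fun h => h.2
      · rintro (rfl | rfl) <;> refine ⟨⟨?_, ?_⟩, by simp⟩ <;> push_cast <;> nlinarith
    rw [this, card_pair (by omega)]
    push_cast
    ring
  · rw [filter_false_of_mem fun a _ h => hsq ⟨a.natAbs, by rw [← h, sq]⟩]
    simp

def altId (d : ℤ) : ℤ := if Even d then -d else d

lemma altId_of_even {d : ℤ} (h : Even d) : altId d = -d := if_pos h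

lemma altId_of_odd {d : ℤ} (h : Odd d) : altId d = d := if_neg (Int.not_even_iff_odd.2 h)

def sigmaAlt (n : ℕ) : ℤ := ∑ p ∈ n.divisorsAntidiagonal with Odd p.2, altId p.1

lemma sigmaAlt_zero : sigmaAlt 0 = 0 := by
  simp [sigmaAlt]

lemma sigmaAlt_eq_sum_divisors (n : ℕ) :
    sigmaAlt n = ∑ d ∈ n.divisors with Odd (n / d), altId d := by
  rw [sigmaAlt, sum_filter, sum_filter]
  exact Nat.sum_divisorsAntidiagonal fun d e => if Odd e then altId d else 0

lemma Nat.even_iff_even_of_odd_div {d n : ℕ} (hd : d ∣ n) (h : Odd (n / d)) :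
    Even d ↔ Even n := by
  conv_rhs => rw [← Nat.mul_div_cancel' hd]
  simp [Nat.even_mul, Nat.not_even_iff_odd.2 h]

lemma sigmaStar_two_mul (m : ℕ) : sigmaStar (2 * m) = 2 * sigmaStar m := by
  have heven : ∀ d, d ∣ 2 * m → Odd (2 * m / d) → 2 ∣ d := fun d hd hodd =>
    ((Nat.even_iff_even_of_odd_div hd hodd).2 (even_two_mul m)).two_dvd
  rw [sigmaStar, sigmaStar, mul_sum]
  refine sum_nbij' (· / 2) (2 * ·) ?_ ?_ ?_ ?_ ?_
  all_goals simp only [mem_filter, Nat.mem_divisors]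
  · rintro d ⟨⟨hd, hm⟩, hodd⟩
    obtain ⟨c, rfl⟩ := heven d hd hodd
    rw [Nat.mul_div_mul_left _ _ two_pos] at hodd
    rw [Nat.mul_div_cancel_left _ two_pos]
    exact ⟨⟨(Nat.mul_dvd_mul_iff_left two_pos).1 hd, by omega⟩, hodd⟩
  · rintro d ⟨⟨hd, hm⟩, hodd⟩
    exact ⟨⟨mul_dvd_mul_left 2 hd, by omega⟩, by rwa [Nat.mul_div_mul_left _ _ two_pos]⟩
  · rintro d ⟨⟨hd, -⟩, hodd⟩
    have := heven d hd hodd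
    omega
  · intro d _
    omega
  · rintro d ⟨⟨hd, -⟩, hodd⟩
    obtain ⟨c, rfl⟩ := heven d hd hodd
    simp

lemma sigmaAlt_eq (n : ℕ) : sigmaAlt n = sigmaStar n - 4 * sigmaStarDiv n 2 := by
  have hparity : ∀ d ∈ {d ∈ n.divisors | Odd (n / d)}, Even (d : ℤ) ↔ Even n := fun d hd => by
    simp only [mem_filter, Nat.mem_divisors] at hd
    rw [Int.even_coe_nat]
    exact Nat.even_iff_even_of_odd_div hd.1.1 hd.2
  rw [sigmaAlt_eq_sum_divisors, sigmaStarDiv]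
  rcases Nat.even_or_odd n with hn | hn
  · obtain ⟨m, rfl⟩ := hn.two_dvd
    rw [sum_congr rfl fun d hd => altId_of_even ((hparity d hd).2 hn), sum_neg_distrib,
      if_pos (dvd_mul_right 2 m), Nat.mul_div_cancel_left _ two_pos, ← sigmaStar,
      sigmaStar_two_mul]
    ring
  · have hn' : ¬Even n := Nat.not_even_iff_odd.2 hn
    rw [sum_congr rfl fun d hd => altId_of_odd (Int.not_even_iff_odd.1 ((hparity d hd).not.2 hn')),
      if_neg (by rwa [← even_iff_two_dvd]), ← sigmaStar]
    ring

section Triples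

structure Triple where
  a : ℤ
  d : ℤ
  e : ℤ

def Triple.equivProd : ℤ × ℤ × ℤ ≃ Triple :=
  ⟨fun p => ⟨p.1, p.2.1, p.2.2⟩, fun t => (t.a, t.d, t.e), fun _ => rfl, fun _ => rfl⟩

noncomputable def triples (n : ℕ) : Finset Triple :=
  {t ∈ (Icc (-n : ℤ) n ×ˢ Icc (1 : ℤ) n ×ˢ Icc (1 : ℤ) n).map Triple.equivProd.toEmbedding |
    t.a ^ 2 + t.d * t.e = n ∧ Odd t.e}

variable {n : ℕ}

lemma mem_triples {t : Triple} :
    t ∈ triples n ↔ t.a ^ 2 + t.d * t.e = n ∧ 0 < t.d ∧ 0 < t.e ∧ Odd t.e := by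
  obtain ⟨a, d, e⟩ := t
  simp only [triples, mem_filter, mem_map_equiv, mem_product, mem_Icc, Triple.equivProd,
    Equiv.coe_fn_symm_mk]
  constructor
  · rintro ⟨⟨-, ⟨hd, -⟩, he, -⟩, h, ho⟩
    exact ⟨h, hd, he, ho⟩
  · rintro ⟨h, hd, he, ho⟩
    have : a ^ 2 + d ≤ n ∧ a ^ 2 + e ≤ n := ⟨by nlinarith, by nlinarith⟩
    refine ⟨⟨⟨?_, ?_⟩, ⟨hd, ?_⟩, he, ?_⟩, h, ho⟩ <;> nlinarith

lemma sum_triples_odd_of_pos :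
    ∑ t ∈ triples n with 0 < t.d + 2 * t.a - t.e ∧ Odd t.d, t.d =
      ∑ t ∈ triples n with 0 < t.d + 2 * t.a - t.e ∧ Even t.d, (t.d + 2 * t.a - t.e) := by
  let ψ : Triple → Triple := fun t => ⟨t.e - t.a, t.d + 2 * t.a - t.e, t.e⟩
  refine sum_nbij' ψ ψ ?_ ?_ ?_ ?_ ?_ <;> rintro ⟨a, d, e⟩ <;>
    simp only [ψ, mem_filter, mem_triples, Int.odd_iff, Int.even_iff, Triple.mk.injEq, and_true]
  · rintro ⟨⟨h, hd, he, ho⟩, hD, hd2⟩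
    exact ⟨⟨by linear_combination h, by omega, he, ho⟩, by omega, by omega⟩
  · rintro ⟨⟨h, hd, he, ho⟩, hD, hd2⟩
    exact ⟨⟨by linear_combination h, by omega, he, ho⟩, by omega, by omega⟩
  · intro _; omega
  · intro _; omega
  · intro _; ring

lemma sum_triples_odd_of_neg :
    ∑ t ∈ triples n with t.d + 2 * t.a - t.e < 0 ∧ Odd t.d, t.d =
      ∑ t ∈ triples n with 0 < t.d + 2 * t.a - t.e ∧ Even t.d, t.e := by
  refine sum_nbij' (fun t => ⟨t.a + t.d, t.e - t.d - 2 * t.a, t.d⟩)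
    (fun t => ⟨t.a - t.e, t.e, t.d + 2 * t.a - t.e⟩) ?_ ?_ ?_ ?_ ?_ <;> rintro ⟨a, d, e⟩ <;>
    simp only [mem_filter, mem_triples, Int.odd_iff, Int.even_iff, Triple.mk.injEq, and_true,
      true_and]
  · rintro ⟨⟨h, hd, he, ho⟩, hD, hd2⟩
    exact ⟨⟨by linear_combination h, by omega, hd, by omega⟩, by omega, by omega⟩
  · rintro ⟨⟨h, hd, he, ho⟩, hD, hd2⟩
    exact ⟨⟨by linear_combination h, he, hD, by omega⟩, by omega, by omega⟩
  · intro _; omega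
  · intro _; omega
  · intro _; trivial

lemma sum_triples_even_of_neg :
    ∑ t ∈ triples n with t.d + 2 * t.a - t.e < 0 ∧ Even t.d, (t.d + 2 * t.a) = 0 := by
  refine sum_involution (fun t _ => ⟨-(t.a + t.d), t.d, t.e - t.d - 2 * t.a⟩) ?_ ?_ ?_ ?_ <;>
    rintro ⟨a, d, e⟩ <;>
    simp only [mem_filter, mem_triples, Int.odd_iff, Int.even_iff, Triple.mk.injEq, true_and,
      ne_eq]
  · intro _; ring
  · intro _ h; omega
  · rintro ⟨⟨h, hd, he, ho⟩, hD, hd2⟩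
    exact ⟨⟨by linear_combination h, hd, by omega, by omega⟩, by omega, hd2⟩
  · intro _; omega

lemma sum_triples_even_a : ∑ t ∈ triples n with Even t.d, t.a = 0 := by
  refine sum_involution (fun t _ => ⟨-t.a, t.d, t.e⟩) ?_ ?_ ?_ ?_ <;>
    rintro ⟨a, d, e⟩ <;>
    simp only [mem_filter, mem_triples, Triple.mk.injEq, and_true, ne_eq]
  · intro _; ring
  · intro _ h; omega
  · rintro ⟨⟨h, hd, he, ho⟩, hd2⟩
    exact ⟨⟨by linear_combination h, hd, he, ho⟩, hd2⟩
  · intro _; simp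

lemma sq_add_eq_of_mem_triples {t : Triple} (ht : t ∈ triples n)
    (hD : t.d + 2 * t.a - t.e = 0) : (t.a + t.d) ^ 2 = n := by
  linear_combination (mem_triples.1 ht).1 + t.d * hD

lemma add_eq_of_mem_triples {r : ℕ} {t : Triple} (ht : t ∈ triples (r * r))
    (hD : t.d + 2 * t.a - t.e = 0) : t.a + t.d = r := by
  have := sq_add_eq_of_mem_triples ht hD
  obtain ⟨-, hd, he, -⟩ := mem_triples.1 ht
  push_cast at this
  exact (pow_left_inj₀ (by omega) (by positivity) two_ne_zero).1 (by linear_combination this)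

lemma sum_triples_diag :
    ∑ t ∈ triples n with t.d + 2 * t.a - t.e = 0, altId t.d =
      if IsSquare n then (n : ℤ) else 0 := by
  split_ifs with hsq
  · obtain ⟨r, rfl⟩ := hsq
    rw [show ((r * r : ℕ) : ℤ) = ∑ j ∈ range r, (2 * j + 1 : ℤ) by
      rw [sum_range_two_mul_add_one]; push_cast; ring]
    refine sum_nbij' (fun t => ((t.d - 1) / 2).toNat)
      (fun j => ⟨r - 2 * j - 1, 2 * j + 1, 2 * r - 2 * j - 1⟩) ?_ ?_ ?_ ?_ ?_
    all_goals simp only [mem_filter, mem_triples, mem_range, Int.odd_iff]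
    · rintro ⟨a, d, e⟩ ⟨⟨h, hd, he, ho⟩, hD⟩
      have := add_eq_of_mem_triples (mem_triples.2 ⟨h, hd, he, Int.odd_iff.2 ho⟩) hD
      dsimp only at *
      omega
    · intro j hj
      exact ⟨⟨by push_cast; ring, by omega, by omega, by omega⟩, by ring⟩
    · rintro ⟨a, d, e⟩ ⟨⟨h, hd, he, ho⟩, hD⟩
      have := add_eq_of_mem_triples (mem_triples.2 ⟨h, hd, he, Int.odd_iff.2 ho⟩) hD
      dsimp only at *
      simp only [Triple.mk.injEq]
      omega
    · intro j _
      omega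
    · rintro ⟨a, d, e⟩ ⟨⟨h, hd, he, ho⟩, hD⟩
      dsimp only at *
      rw [altId_of_odd (Int.odd_iff.2 (by omega))]
      omega
  · refine sum_eq_zero fun t ht => absurd ?_ hsq
    rw [mem_filter] at ht
    refine ⟨(t.a + t.d).natAbs, ?_⟩
    rw [← sq, ← Nat.cast_inj (R := ℤ), ← sq_add_eq_of_mem_triples ht.1 ht.2, Nat.cast_pow,
      Int.natAbs_sq]

variable (n) in
lemma sum_triples_altId :
    ∑ t ∈ triples n, altId t.d = if IsSquare n then (n : ℤ) else 0 := by
  -- pointwise, `altId t.d` is its diagonal part plus a combination of the four sums above;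
  -- the case analysis needs that `t.d + 2 * t.a - t.e` is odd when `t.d` is even
  have key : ∀ t ∈ triples n, altId t.d =
      (if t.d + 2 * t.a - t.e = 0 then altId t.d else 0)
      + ((if 0 < t.d + 2 * t.a - t.e ∧ Odd t.d then t.d else 0)
          - (if 0 < t.d + 2 * t.a - t.e ∧ Even t.d then t.d + 2 * t.a - t.e else 0))
      + ((if t.d + 2 * t.a - t.e < 0 ∧ Odd t.d then t.d else 0)
          - (if 0 < t.d + 2 * t.a - t.e ∧ Even t.d then t.e else 0))
      - (if t.d + 2 * t.a - t.e < 0 ∧ Even t.d then t.d + 2 * t.a else 0)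
      + 2 * (if Even t.d then t.a else 0) := by
    intro t ht
    have he := (mem_triples.1 ht).2.2.2
    simp only [altId, Int.odd_iff, Int.even_iff] at *
    split_ifs <;> omega
  rw [sum_congr rfl key]
  simp only [sum_add_distrib, sum_sub_distrib, ← mul_sum]
  simp only [← sum_filter]
  rw [sum_triples_diag, sum_triples_odd_of_pos, sum_triples_odd_of_neg, sum_triples_even_of_neg,
    sum_triples_even_a]
  ring

lemma natCast_sub_natAbs_sq {a : ℤ} (h : a.natAbs ^ 2 ≤ n) :
    ((n - a.natAbs ^ 2 : ℕ) : ℤ) = n - a ^ 2 := by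
  rw [Nat.cast_sub h, Nat.cast_pow, Int.natAbs_sq]

lemma sum_triples_fiber (a : ℤ) :
    ∑ t ∈ triples n with t.a = a, altId t.d = sigmaAlt (n - a.natAbs ^ 2) := by
  rw [sigmaAlt]
  refine sum_nbij' (fun t => (t.d.toNat, t.e.toNat)) (fun p => ⟨a, p.1, p.2⟩) ?_ ?_ ?_ ?_ ?_
  · rintro ⟨a', d, e⟩ ht
    simp only [mem_filter, mem_triples] at ht
    obtain ⟨⟨h, hd, he, ho⟩, rfl⟩ := ht
    lift d to ℕ using hd.le
    lift e to ℕ using he.le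
    have hde : 0 < (d : ℤ) * e := by positivity
    have hle : a'.natAbs ^ 2 ≤ n := by
      rw [← Nat.cast_le (α := ℤ), Nat.cast_pow, Int.natAbs_sq]; linarith
    simp only [Int.toNat_natCast, mem_filter, Nat.mem_divisorsAntidiagonal]
    refine ⟨⟨?_, ?_⟩, Int.odd_coe_nat e |>.1 ho⟩
    · rw [← Nat.cast_inj (R := ℤ), natCast_sub_natAbs_sq hle]
      push_cast
      linarith
    · rw [← Nat.cast_ne_zero (R := ℤ), natCast_sub_natAbs_sq hle]
      linarith
  · rintro ⟨d, e⟩ hp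
    simp only [mem_filter, Nat.mem_divisorsAntidiagonal] at hp
    obtain ⟨⟨hde, hn⟩, ho⟩ := hp
    have hle : a.natAbs ^ 2 ≤ n := by omega
    have hd : d ≠ 0 := by rintro rfl; omega
    have he : e ≠ 0 := by rintro rfl; omega
    simp only [mem_filter, mem_triples, and_true]
    refine ⟨?_, by positivity, by positivity, Int.odd_coe_nat e |>.2 ho⟩
    rw [← Nat.cast_mul, hde, natCast_sub_natAbs_sq hle]
    ring
  · rintro ⟨a', d, e⟩ ht
    simp only [mem_filter, mem_triples] at ht
    obtain ⟨⟨-, hd, he, -⟩, rfl⟩ := ht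
    dsimp only
    simp only [Triple.mk.injEq, true_and]
    omega
  · intro p _
    simp
  · rintro ⟨a', d, e⟩ ht
    simp only [mem_filter, mem_triples] at ht
    dsimp only
    rw [Int.toNat_of_nonneg ht.1.2.1.le]

variable (n) in
lemma sum_triples_altId_eq_sum_antidiagonal :
    ∑ t ∈ triples n, altId t.d = ∑ q ∈ antidiagonal n, (rSq 1 q.1 : ℤ) * sigmaAlt q.2 := by
  rw [sum_antidiagonal_rSq_one_mul, ← sum_fiberwise_of_maps_to (g := Triple.a) fun t ht => ?_]
  · exact sum_congr rfl fun a _ => sum_triples_fiber a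
  obtain ⟨h, hd, he, -⟩ := mem_triples.1 ht
  have hde : 0 < t.d * t.e := mul_pos hd he
  have hle : t.a.natAbs ≤ t.a.natAbs ^ 2 := Nat.le_self_pow two_ne_zero _
  have hsq : ((t.a.natAbs ^ 2 : ℕ) : ℤ) = t.a ^ 2 := by rw [Nat.cast_pow, Int.natAbs_sq]
  simp only [mem_filter, mem_Icc]
  omega

end Triples

noncomputable def theta : ℤ⟦X⟧ := PowerSeries.mk fun n => (rSq 1 n : ℤ)

lemma theta_pow (k : ℕ) : theta ^ k = PowerSeries.mk fun n => (rSq k n : ℤ) := by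
  induction k with
  | zero => ext n; simp [rSq_zero_left, coeff_one]
  | succ k ih =>
    ext n
    rw [pow_succ, ih, theta, coeff_mul, coeff_mk, rSq_add]
    push_cast
    simp only [coeff_mk]

lemma X_mul_derivative_theta : X * d⁄dX ℤ theta = 2 * (theta * PowerSeries.mk sigmaAlt) := by
  ext n
  rw [coeff_X_mul_derivative, ← map_ofNat C 2, coeff_C_mul, coeff_mul, theta]
  simp only [coeff_mk]
  rw [← sum_triples_altId_eq_sum_antidiagonal, sum_triples_altId, natCast_mul_rSq_one]

lemma X_mul_derivative_theta_pow (k : ℕ) :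
    X * d⁄dX ℤ (theta ^ k) = 2 * (k : ℤ⟦X⟧) * (theta ^ k * PowerSeries.mk sigmaAlt) := by
  have hpow : (k : ℤ⟦X⟧) * theta ^ (k - 1) * theta = k * theta ^ k := by
    rcases k with _ | k
    · simp
    · rw [Nat.add_sub_cancel, mul_assoc, ← pow_succ]
  rw [derivative_pow]
  linear_combination (k * theta ^ (k - 1)) * X_mul_derivative_theta +
    2 * PowerSeries.mk sigmaAlt * hpow

lemma natCast_mul_rSq (n k : ℕ) :
    (n : ℤ) * rSq k n = 2 * k * ∑ q ∈ antidiagonal n, (rSq k q.1 : ℤ) * sigmaAlt q.2 := by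
  have := congrArg (coeff n) (X_mul_derivative_theta_pow k)
  rw [coeff_X_mul_derivative, ← map_ofNat C 2, ← map_natCast C k, ← map_mul, coeff_C_mul,
    coeff_mul, theta_pow] at this
  simpa only [coeff_mk] using this

theorem sum_of_squares_recursion_general (n k : ℕ) :
    (n : ℤ) * rSq k n =
      2 * k * (sigmaStar n - 4 * sigmaStarDiv n 2 +
        ∑ j ∈ Finset.Icc 1 (n - 1),
          (rSq k j : ℤ) * (sigmaStar (n - j) - 4 * sigmaStarDiv (n - j) 2)) := by
  rw [natCast_mul_rSq, Finset.Nat.sum_antidiagonal_eq_add_sum_Icc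
    (fun i j => (rSq k i : ℤ) * sigmaAlt j) n (by simp [sigmaAlt_zero]), rSq_zero_right]
  simp only [sigmaAlt_eq, Nat.cast_one, one_mul]

theorem sum_of_squares_recursion (n k : ℕ) (hn : 0 < n) (hk : 0 < k) :
    (n : ℤ) * rSq k n =
      2 * k * (sigmaStar n - 4 * sigmaStarDiv n 2 +
        ∑ j ∈ Finset.Icc 1 (n - 1),
          (rSq k j : ℤ) * (sigmaStar (n - j) - 4 * sigmaStarDiv (n - j) 2)) :=
  sum_of_squares_recursion_general n k
end

section
/- For every positive integer n, 4σ(n) - 4σ(n/2) + 8σ(n/4) - 32σ(n/8) > 0, where σ(q) = 0 when q is not a positive integer. -/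
/-! Write `n = 2 ^ k * m` with `m` odd. Multiplicativity of `σ` gives
`σ(2 ^ j * m) = (2 ^ (j + 1) - 1) σ(m)`, so the combination equals `c σ(m)` with
`c = 4, 8, 24` for `k = 0, 1, 2`; for `k ≥ 3` the powers of two cancel and `c = 24` again. -/

open ArithmeticFunction
open scoped ArithmeticFunction.sigma

lemma sigma1_eq_sigma_one (n : ℕ) : sigma1 n = σ 1 n := by
  simp [sigma1, sigma_one_apply]

lemma sigma1_pos {n : ℕ} (hn : n ≠ 0) : 0 < sigma1 n := by
  rw [sigma1_eq_sigma_one]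
  exact_mod_cast sigma_pos 1 n hn

lemma sigma1_two_pow_mul {m : ℕ} (hm : Odd m) (k : ℕ) :
    sigma1 (2 ^ k * m) = (2 ^ (k + 1) - 1) * sigma1 m := by
  have hcop : Nat.Coprime (2 ^ k) m := (Nat.coprime_two_left.2 hm).pow_left k
  rw [sigma1_eq_sigma_one, sigma1_eq_sigma_one, isMultiplicative_sigma.map_mul_of_coprime hcop,
    sigma_one_apply_prime_pow Nat.prime_two, Nat.cast_mul, Nat.cast_sum]
  push_cast
  rw [← geom_sum_mul]
  norm_num

lemma sigmaDiv_two_pow_mul {m : ℕ} (hm : Odd m) (k j : ℕ) :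
    sigmaDiv (2 ^ k * m) (2 ^ j) = if j ≤ k then (2 ^ (k - j + 1) - 1) * sigma1 m else 0 := by
  unfold sigmaDiv
  by_cases hjk : j ≤ k
  · have hsplit : 2 ^ k * m = 2 ^ j * (2 ^ (k - j) * m) := by
      rw [← mul_assoc, ← pow_add, Nat.add_sub_cancel' hjk]
    rw [if_pos hjk, hsplit, if_pos (dvd_mul_right _ _),
      Nat.mul_div_cancel_left _ (by positivity), sigma1_two_pow_mul hm]
  · have hndvd : ¬ 2 ^ j ∣ 2 ^ k * m := fun h => hjk <|
      (Nat.pow_dvd_pow_iff_le_right one_lt_two).1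
        (((Nat.coprime_two_left.2 hm).pow_left j).dvd_of_dvd_mul_right h)
    rw [if_neg hndvd, if_neg hjk]

theorem williams_positivity (n : ℕ) (hn : 0 < n) :
    0 < 4 * sigma1 n - 4 * sigmaDiv n 2 + 8 * sigmaDiv n 4 - 32 * sigmaDiv n 8 := by
  obtain ⟨k, m, hm, rfl⟩ := Nat.exists_eq_two_pow_mul_odd hn.ne'
  have hσ := sigma1_pos hm.pos.ne'
  have h2 := sigmaDiv_two_pow_mul hm k 1
  have h4 := sigmaDiv_two_pow_mul hm k 2
  have h8 := sigmaDiv_two_pow_mul hm k 3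
  norm_num at h2 h4 h8
  rw [h2, h4, h8, sigma1_two_pow_mul hm]
  rcases k with _ | _ | _ | k <;> simp <;> ring_nf <;> linarith
end

section
/- If ∏_{n=1}^∞ (1+x^n)^4 (1+x^{2n})^2 (1+x^{4n})^4 = ∑_{n≥0} α(n)x^n, then α(n) > 0 for all n ≥ 0. -/
/-!
The product is `∏_{k ≥ 1} P(x^k)` for `P = (1+X)^4 (1+X^2)^2 (1+X^4)^4 ∈ ℕ[X]`, `P(0) = 1`.
Since `P(X^k) ≡ 1 mod X^k`, the coefficient of `x^m` in the partial products
`Q_N = ∏_{k ≤ N} P(X^k)` is nondecreasing in `N` and constant for `N ≥ m`; call the limit `b m`.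
It is at least the coefficient of `X` in `P`, coming from `X^m` in the factor `P(X^m)`.
On `[0, 1)` the partial sums of `∑ b m t^m` are bounded by the convergent products `Q_N(t)`, and
by dominated convergence `∑ b m x^m = lim Q_N(x)` for `|x| < 1`. Hence `∑ α n x^n` agrees with it
near `0`; it converges at `1/2`, since otherwise its sum would be `0` while `∑ b m 2^{-m} ≥ 1`.
Uniqueness of power series expansions gives `α = b ≥ 1`.
-/

open Filter Topology Finset Polynomial

section PowerSeriesUniqueness

variable {𝕜 : Type*} [NontriviallyNormedField 𝕜] [CompleteSpace 𝕜]

theorem hasFPowerSeriesAt_tsum_mul_pow {c : ℕ → 𝕜} {r : 𝕜} (hr : r ≠ 0)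
    (hc : Summable fun n => c n * r ^ n) :
    HasFPowerSeriesAt (fun x => ∑' n, c n * x ^ n) (.ofScalars 𝕜 c) 0 := by
  have hradius : (‖r‖₊ : ENNReal) ≤ (FormalMultilinearSeries.ofScalars 𝕜 c).radius :=
    FormalMultilinearSeries.le_radius_of_tendsto _ (l := 0) <| by
      simpa [FormalMultilinearSeries.ofScalars_norm] using hc.tendsto_atTop_zero.norm
  have hpos : 0 < (FormalMultilinearSeries.ofScalars 𝕜 c).radius :=
    lt_of_lt_of_le (by simpa using hr) hradius
  have hsum :=
    ((FormalMultilinearSeries.ofScalars 𝕜 c).hasFPowerSeriesOnBall hpos).hasFPowerSeriesAt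
  rwa [← FormalMultilinearSeries.ofScalarsSum, FormalMultilinearSeries.ofScalarsSum_eq_tsum]
    at hsum

theorem eq_of_tsum_mul_pow_eventually_eq {c d : ℕ → 𝕜} {r s : 𝕜} (hr : r ≠ 0) (hs : s ≠ 0)
    (hc : Summable fun n => c n * r ^ n) (hd : Summable fun n => d n * s ^ n)
    (h : ∀ᶠ x in 𝓝 0, ∑' n, c n * x ^ n = ∑' n, d n * x ^ n) : c = d :=
  FormalMultilinearSeries.ofScalars_series_injective 𝕜 𝕜 <|
    (hasFPowerSeriesAt_tsum_mul_pow hr hc).eq_formalMultilinearSeries_of_eventually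
      (hasFPowerSeriesAt_tsum_mul_pow hs hd) h

end PowerSeriesUniqueness

theorem norm_natCast_mul_pow_le {R : Type*} [NormedRing R] [NormOneClass R] (n : ℕ) (x : R)
    (m : ℕ) : ‖(n : R) * x ^ m‖ ≤ n * ‖x‖ ^ m :=
  (norm_mul_le _ _).trans <| mul_le_mul (by simpa using Nat.norm_cast_le (α := R) n)
    (norm_pow_le x m) (norm_nonneg _) (Nat.cast_nonneg _)

namespace Polynomial

theorem coeff_mul_coeff_le_coeff_mul (p q : ℕ[X]) (i j : ℕ) :
    p.coeff i * q.coeff j ≤ (p * q).coeff (i + j) := by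
  rw [coeff_mul]
  exact single_le_sum (f := fun x => p.coeff x.1 * q.coeff x.2)
    (fun _ _ => Nat.zero_le _) (a := (i, j)) (mem_antidiagonal.2 rfl)

theorem sum_range_coeff_mul_pow_le_aeval (p : ℕ[X]) {t : ℝ} (ht : 0 ≤ t) (M : ℕ) :
    ∑ m ∈ range M, (p.coeff m : ℝ) * t ^ m ≤ aeval t p := by
  rw [aeval_eq_sum_range' (n := M + p.natDegree + 1) (by omega)]
  simp only [nsmul_eq_mul]
  exact sum_le_sum_of_subset_of_nonneg (range_subset_range.2 (by omega))
    fun _ _ _ => by positivity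

theorem norm_aeval_le_eval_one {R : Type*} [NormedRing R] [NormOneClass R] (p : ℕ[X]) {y : R}
    (hy : ‖y‖ ≤ 1) : ‖aeval y p‖ ≤ p.eval 1 := by
  rw [aeval_eq_sum_range, eval_eq_sum_range, Nat.cast_sum]
  refine (norm_sum_le _ _).trans (sum_le_sum fun i _ => ?_)
  calc ‖p.coeff i • y ^ i‖ ≤ p.coeff i * ‖y ^ i‖ := norm_nsmul_le
    _ ≤ p.coeff i * 1 :=
        mul_le_mul_of_nonneg_left ((norm_pow_le y i).trans (pow_le_one₀ (norm_nonneg y) hy))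
          (Nat.cast_nonneg _)
    _ = ((p.coeff i * 1 ^ i : ℕ) : ℝ) := by simp

variable (P : ℕ[X])

noncomputable def prodExpand (N : ℕ) : ℕ[X] := ∏ k ∈ range N, expand ℕ (k + 1) P

noncomputable def prodExpandCoeff (m : ℕ) : ℕ := (prodExpand P m).coeff m

variable {P}

theorem aeval_prodExpand {A : Type*} [CommSemiring A] (x : A) (N : ℕ) :
    aeval x (prodExpand P N) = ∏ k ∈ range N, aeval (x ^ (k + 1)) P := by
  simp only [prodExpand, map_prod, expand_aeval]

theorem expand_eq_one_add_X_pow_mul (hP : P.coeff 0 = 1) (k : ℕ) :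
    expand ℕ k P = 1 + X ^ k * expand ℕ k P.divX := by
  conv_lhs => rw [← X_mul_divX_add P]
  simp [hP, add_comm]

theorem exists_prodExpand_add (hP : P.coeff 0 = 1) (N j : ℕ) :
    ∃ S, prodExpand P (N + j) = prodExpand P N * (1 + X ^ (N + 1) * S) := by
  rw [prodExpand, prod_range_add, ← prodExpand]
  suffices ∃ S, ∏ k ∈ range j, expand ℕ (N + k + 1) P = 1 + X ^ (N + 1) * S from
    this.imp fun S hS => by rw [hS]
  refine prod_induction _ (fun p => ∃ S, p = 1 + X ^ (N + 1) * S) ?_ ⟨0, by simp⟩ ?_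
  · rintro _ _ ⟨S, rfl⟩ ⟨T, rfl⟩
    exact ⟨S + T + X ^ (N + 1) * S * T, by ring⟩
  · intro k _
    refine ⟨X ^ k * expand ℕ (N + k + 1) P.divX, ?_⟩
    rw [expand_eq_one_add_X_pow_mul hP]
    ring

theorem coeff_prodExpand_le_add (hP : P.coeff 0 = 1) (N j m : ℕ) :
    (prodExpand P N).coeff m ≤ (prodExpand P (N + j)).coeff m := by
  obtain ⟨S, hS⟩ := exists_prodExpand_add hP N j
  rw [hS, mul_add, mul_one, coeff_add]
  exact Nat.le_add_right _ _

theorem coeff_prodExpand_add_of_le (hP : P.coeff 0 = 1) {m N : ℕ} (hm : m ≤ N) (j : ℕ) :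
    (prodExpand P (N + j)).coeff m = (prodExpand P N).coeff m := by
  obtain ⟨S, hS⟩ := exists_prodExpand_add hP N j
  rw [hS, mul_add, mul_one, coeff_add, mul_left_comm, coeff_X_pow_mul', if_neg (by omega),
    add_zero]

theorem coeff_prodExpand_of_le (hP : P.coeff 0 = 1) {m N : ℕ} (h : m ≤ N) :
    (prodExpand P N).coeff m = prodExpandCoeff P m := by
  obtain ⟨j, rfl⟩ := Nat.exists_eq_add_of_le h
  exact coeff_prodExpand_add_of_le hP le_rfl j

theorem coeff_prodExpand_le (hP : P.coeff 0 = 1) (N m : ℕ) :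
    (prodExpand P N).coeff m ≤ prodExpandCoeff P m := by
  rcases le_total N m with h | h
  · obtain ⟨j, rfl⟩ := Nat.exists_eq_add_of_le h
    exact coeff_prodExpand_le_add hP N j _
  · exact (coeff_prodExpand_of_le hP h).le

@[simp]
theorem prodExpandCoeff_zero : prodExpandCoeff P 0 = 1 := by
  simp [prodExpandCoeff, prodExpand]

theorem one_le_prodExpandCoeff (hP₀ : P.coeff 0 = 1) (hP₁ : 1 ≤ P.coeff 1) (m : ℕ) :
    1 ≤ prodExpandCoeff P m := by
  rcases m with _ | m
  · simp
  have hconst : (prodExpand P m).coeff 0 = 1 := by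
    rw [coeff_prodExpand_of_le hP₀ (Nat.zero_le m), prodExpandCoeff_zero]
  have hX : (expand ℕ (m + 1) P).coeff (m + 1) = P.coeff 1 := by
    rw [coeff_expand m.succ_pos, if_pos dvd_rfl, Nat.div_self m.succ_pos]
  calc 1 ≤ (prodExpand P m).coeff 0 * (expand ℕ (m + 1) P).coeff (m + 1) := by
        rwa [hconst, one_mul, hX]
    _ ≤ (prodExpand P m * expand ℕ (m + 1) P).coeff (0 + (m + 1)) :=
        coeff_mul_coeff_le_coeff_mul _ _ _ _
    _ = prodExpandCoeff P (m + 1) := by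
        rw [zero_add, prodExpandCoeff, prodExpand, prodExpand, prod_range_succ]

section Analytic

variable {R : Type*} [NormedCommRing R] [NormOneClass R]

theorem norm_aeval_sub_one_le (hP : P.coeff 0 = 1) {y : R} (hy : ‖y‖ ≤ 1) :
    ‖aeval y P - 1‖ ≤ P.divX.eval 1 * ‖y‖ := by
  conv_lhs => rw [← X_mul_divX_add P, hP]
  simp only [map_add, map_mul, aeval_X, map_one, add_sub_cancel_right]
  exact (norm_mul_le _ _).trans_eq (mul_comm _ _) |>.trans
    (mul_le_mul_of_nonneg_right (norm_aeval_le_eval_one _ hy) (norm_nonneg y))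

variable [CompleteSpace R]

theorem multipliable_aeval_pow_succ (hP : P.coeff 0 = 1) {x : R} (hx : ‖x‖ < 1) :
    Multipliable fun k => aeval (x ^ (k + 1)) P := by
  have hgeom : Summable fun k => P.divX.eval 1 * (‖x‖ * ‖x‖ ^ k : ℝ) :=
    ((summable_geometric_of_lt_one (norm_nonneg x) hx).mul_left ‖x‖).mul_left _
  simpa using multipliable_one_add_of_summable (f := fun k => aeval (x ^ (k + 1)) P - 1) <|
    hgeom.of_nonneg_of_le (fun _ => norm_nonneg _) fun k =>
      (norm_aeval_sub_one_le hP (y := x ^ (k + 1))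
        ((norm_pow_le x _).trans (pow_le_one₀ (norm_nonneg x) hx.le))).trans <| by
          gcongr
          exact (norm_pow_le x _).trans_eq (pow_succ' _ _)

theorem tendsto_aeval_prodExpand (hP : P.coeff 0 = 1) {x : R} (hx : ‖x‖ < 1) :
    Tendsto (fun N => aeval x (prodExpand P N)) atTop (𝓝 (∏' k, aeval (x ^ (k + 1)) P)) := by
  simpa only [aeval_prodExpand] using (multipliable_aeval_pow_succ hP hx).hasProd.tendsto_prod_nat

theorem summable_prodExpandCoeff_mul_pow_of_nonneg (hP : P.coeff 0 = 1) {t : ℝ} (ht₀ : 0 ≤ t)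
    (ht₁ : t < 1) : Summable fun m => (prodExpandCoeff P m : ℝ) * t ^ m := by
  have hx : ‖t‖ < 1 := by rwa [Real.norm_of_nonneg ht₀]
  obtain ⟨C, hC⟩ := (tendsto_aeval_prodExpand hP hx).bddAbove_range
  refine summable_of_sum_range_le (c := C) (fun _ => by positivity) fun M => ?_
  calc ∑ m ∈ range M, (prodExpandCoeff P m : ℝ) * t ^ m
      = ∑ m ∈ range M, ((prodExpand P M).coeff m : ℝ) * t ^ m :=
        sum_congr rfl fun m hm => by rw [coeff_prodExpand_of_le hP (mem_range.1 hm).le]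
    _ ≤ aeval t (prodExpand P M) := sum_range_coeff_mul_pow_le_aeval _ ht₀ M
    _ ≤ C := hC ⟨M, rfl⟩

theorem tsum_prodExpandCoeff_mul_ofReal_pow_ne_zero {𝕜 : Type*} [RCLike 𝕜]
    (hP : P.coeff 0 = 1) {t : ℝ} (ht₀ : 0 ≤ t) (ht₁ : t < 1) :
    ∑' m, (prodExpandCoeff P m : 𝕜) * (t : 𝕜) ^ m ≠ 0 := by
  have hsum := summable_prodExpandCoeff_mul_pow_of_nonneg hP ht₀ ht₁
  have hone : 1 ≤ ∑' m, (prodExpandCoeff P m : ℝ) * t ^ m := by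
    simpa using hsum.le_tsum 0 fun m _ => by positivity
  have hne : ((∑' m, (prodExpandCoeff P m : ℝ) * t ^ m : ℝ) : 𝕜) ≠ 0 :=
    RCLike.ofReal_ne_zero.2 (by linarith)
  simpa [RCLike.ofReal_tsum] using hne

theorem summable_prodExpandCoeff_mul_pow (hP : P.coeff 0 = 1) {x : R} (hx : ‖x‖ < 1) :
    Summable fun m => (prodExpandCoeff P m : R) * x ^ m :=
  .of_norm_bounded (summable_prodExpandCoeff_mul_pow_of_nonneg hP (norm_nonneg x) hx)
    fun m => norm_natCast_mul_pow_le _ x m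

theorem tprod_aeval_pow_succ_eq_tsum (hP : P.coeff 0 = 1) {x : R} (hx : ‖x‖ < 1) :
    ∏' k, aeval (x ^ (k + 1)) P = ∑' m, (prodExpandCoeff P m : R) * x ^ m := by
  refine tendsto_nhds_unique (tendsto_aeval_prodExpand hP hx) ?_
  have hpartial (N : ℕ) :
      aeval x (prodExpand P N) = ∑' m, ((prodExpand P N).coeff m : R) * x ^ m := by
    rw [aeval_eq_sum_range, tsum_eq_sum (s := range ((prodExpand P N).natDegree + 1))]
    · simp only [nsmul_eq_mul]
    · intro m hm
      rw [coeff_eq_zero_of_natDegree_lt (by simpa using hm), Nat.cast_zero, zero_mul]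
  simp only [hpartial]
  refine tendsto_tsum_of_dominated_convergence
    (summable_prodExpandCoeff_mul_pow_of_nonneg hP (norm_nonneg x) hx)
    (fun m => tendsto_atTop_of_eventually_const fun N hN => by
      rw [coeff_prodExpand_of_le hP hN]) (Eventually.of_forall fun N m => ?_)
  calc ‖((prodExpand P N).coeff m : R) * x ^ m‖ ≤ (prodExpand P N).coeff m * ‖x‖ ^ m :=
        norm_natCast_mul_pow_le _ x m
    _ ≤ prodExpandCoeff P m * ‖x‖ ^ m := by gcongr; exact coeff_prodExpand_le hP N m

end Analytic

end Polynomial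

noncomputable def factorPoly : ℕ[X] := (1 + X) ^ 4 * (1 + X ^ 2) ^ 2 * (1 + X ^ 4) ^ 4

theorem coeff_zero_factorPoly : factorPoly.coeff 0 = 1 := by
  simp [factorPoly, coeff_zero_eq_eval_zero]

theorem one_le_coeff_one_factorPoly : 1 ≤ factorPoly.coeff 1 := by
  simp [factorPoly, coeff_mul, coeff_one_add_X_pow, Nat.antidiagonal_succ,
    coeff_zero_eq_eval_zero]
  omega

theorem aeval_pow_factorPoly {A : Type*} [CommSemiring A] (x : A) (k : ℕ) :
    aeval (x ^ k) factorPoly =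
      (1 + x ^ k) ^ 4 * (1 + x ^ (2 * k)) ^ 2 * (1 + x ^ (4 * k)) ^ 4 := by
  simp [factorPoly, ← pow_mul, mul_comm]

theorem series_positivity (α : ℕ → ℝ)
    (hα : ∀ x : ℂ, ‖x‖ < 1 →
      (∏' n : ℕ,
          (1 + x ^ (n + 1)) ^ 4 * (1 + x ^ (2 * (n + 1))) ^ 2 * (1 + x ^ (4 * (n + 1))) ^ 4) =
        ∑' n : ℕ, (α n : ℂ) * x ^ n) :
    ∀ n : ℕ, 0 < α n := by
  set b := prodExpandCoeff factorPoly
  have hb {x : ℂ} (hx : ‖x‖ < 1) : ∑' n, (α n : ℂ) * x ^ n = ∑' m, (b m : ℂ) * x ^ m := by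
    rw [← hα x hx, ← tprod_aeval_pow_succ_eq_tsum coeff_zero_factorPoly hx]
    simp only [aeval_pow_factorPoly]
  have ht : ‖((1 / 2 : ℝ) : ℂ)‖ < 1 := by norm_num
  have hb_ne : ∑' m, (b m : ℂ) * ((1 / 2 : ℝ) : ℂ) ^ m ≠ 0 :=
    tsum_prodExpandCoeff_mul_ofReal_pow_ne_zero coeff_zero_factorPoly (t := 1 / 2) (by norm_num)
      (by norm_num)
  have hα_summable : Summable fun n => (α n : ℂ) * ((1 / 2 : ℝ) : ℂ) ^ n :=
    of_not_not fun h => hb_ne (by rw [← hb ht, tsum_eq_zero_of_not_summable h])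
  have hαb : (fun n => (α n : ℂ)) = fun m => (b m : ℂ) :=
    eq_of_tsum_mul_pow_eventually_eq (by norm_num) (by norm_num) hα_summable
      (summable_prodExpandCoeff_mul_pow coeff_zero_factorPoly ht)
      (eventually_of_mem (Metric.ball_mem_nhds 0 one_pos) fun x hx => hb (by simpa using hx))
  intro n
  have hαn : α n = b n := by exact_mod_cast congrFun hαb n
  rw [hαn]
  exact_mod_cast one_le_prodExpandCoeff coeff_zero_factorPoly one_le_coeff_one_factorPoly n
end
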